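/- Let G be a finite group and P a G-poset with an initial object x₀. With the atomic topologies on P⋊G and on the one-object category of G, the functor π : P⋊G → G is both continuous and cocontinuous. Concretely: (i) for every right G-set M (every presheaf on the one-object category of G is a sheaf for its atomic topology), the presheaf Res_π M is a sheaf on (P⋊G, J_at); and (ii) for every object x of P⋊G and every covering sieve T on π(x), the sieve {u : codomain x, π(u) ∈ T} is a covering sieve on x. -/

import Mathlib

/-!
On a groupoid the atomic topology is the trivial one, since a sieve containing an isomorphism
is maximal; so every presheaf on `G` is a sheaf, and (ii) holds because the pullback of the
maximal sieve is maximal.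
The presheaf `Res_π M` sends every morphism to an invertible map, and on an atomic site
satisfying the Ore condition such a presheaf is a sheaf. The Ore condition holds in `P ⋊ G`
because the initial object `x₀` maps to every object and is fixed by `G`.
-/

open CategoryTheory

/-! ## Basic site-theoretic notions -/

/-- The Ore condition: any cospan can be completed to a commutative square. -/
def OreCondition (C : Type*) [Category C] : Prop :=
  ∀ ⦃x y z : C⦄ (f : y ⟶ x) (g : z ⟶ x),
    ∃ (w : C) (p : w ⟶ y) (q : w ⟶ z), p ≫ f = q ≫ g

/-- A Grothendieck topology is the atomic topology iff its covering sieves are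
exactly the nonempty sieves. -/
def IsAtomicTopology {C : Type*} [Category C] (J : GrothendieckTopology C) : Prop :=
  ∀ (x : C) (S : Sieve x), S ∈ J x ↔ ∃ (y : C) (f : y ⟶ x), S f

/-- The presieve on `c` consisting of all morphisms with domain `c₀`. -/
def domPresieve {C : Type*} [Category C] (c₀ : C) (c : C) : Presieve c :=
  fun Y => {_f | Y = c₀}

/-! ## Right `G`-sets and the orbit category -/

/-- The category of right `G`-sets, realized as presheaves of sets on the
one-object category of `G`. -/
abbrev GSet (G : Type) [Group G] := (SingleObj G)ᵒᵖ ⥤ Type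

variable {G : Type} [Group G]

/-- The right coset space `H\G` as a right `G`-set (`G` acting by right
multiplication). -/
def cosetGSet (H : Subgroup G) : GSet G where
  obj _ := Quotient (QuotientGroup.rightRel H)
  map f := TypeCat.ofHom (Quotient.map' (fun x => x * f.unop)
    (fun a b hab => by
      rw [QuotientGroup.rightRel_apply] at hab ⊢
      have heq : (b * f.unop) * (a * f.unop)⁻¹ = b * a⁻¹ := by group
      rwa [heq]))
  map_id _ := by
    ext q
    induction q using Quotient.inductionOn' with
    | h a => exact congrArg (Quotient.mk _) (mul_one a)
  map_comp f g := by
    ext q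
    induction q using Quotient.inductionOn' with
    | h a => exact congrArg (Quotient.mk _) (mul_assoc a f.unop g.unop).symm

/-- The orbit category `O(G)`: the full subcategory of right `G`-sets on the
coset spaces `H\G`, indexed by the subgroups of `G`. -/
abbrev OrbitCat (G : Type) [Group G] := InducedCategory (GSet G) (cosetGSet (G := G))

/-- For `a ∈ G`, the `G`-map `c_a : 1\G → 1\G`, `k ↦ a * k`. -/
def botAuto (a : G) : cosetGSet (⊥ : Subgroup G) ⟶ cosetGSet (⊥ : Subgroup G) where
  app _ := TypeCat.ofHom (Quotient.map' (fun k => a * k)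
    (fun x y hxy => by
      rw [QuotientGroup.rightRel_apply] at hxy ⊢
      simp only [Subgroup.mem_bot] at hxy ⊢
      rw [mul_inv_rev, ← mul_assoc, mul_assoc a, hxy]
      simp))
  naturality X Y f := by
    ext q
    induction q using Quotient.inductionOn' with
    | h k => exact congrArg (Quotient.mk _) (mul_assoc a k f.unop).symm

/-- The functor from the one-object category of `G` to the orbit category with
value `1\G`, sending `a` to `c_a`; it makes `F(1\G)` a right `G`-set for any
presheaf `F` on the orbit category. -/
def orbitBotIota (G : Type) [Group G] : SingleObj G ⥤ OrbitCat G where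
  obj _ := (⊥ : Subgroup G)
  map a := InducedCategory.homMk (botAuto a)
  map_id _ := by
    apply InducedCategory.hom_ext
    apply NatTrans.ext
    funext X
    ext q
    induction q using Quotient.inductionOn' with
    | h k => exact congrArg (Quotient.mk _) (one_mul k)
  map_comp {x y z} a b := by
    apply InducedCategory.hom_ext
    apply NatTrans.ext
    funext X
    ext q
    induction q using Quotient.inductionOn' with
    | h k => exact congrArg (Quotient.mk _) (mul_assoc b a k)

/-! ## The transporter category of a `G`-poset -/

/-- The transporter category `P ⋊ G` of a `G`-poset `P`: objects are those of
`P`, and morphisms `x ⟶ y` are elements `g ∈ G` with `g • x ≤ y`. -/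
@[ext] structure Transporter (G : Type) (P : Type) where pt : P

instance Transporter.category (G P : Type) [Group G] [PartialOrder P] [MulAction G P]
    [CovariantClass G P (· • ·) (· ≤ ·)] : Category (Transporter G P) where
  Hom x y := { g : G // g • x.pt ≤ y.pt }
  id x := ⟨1, by simp⟩
  comp {x y z} f g := ⟨g.1 * f.1, by
    rw [mul_smul]
    exact le_trans (CovariantClass.elim g.1 f.2) g.2⟩
  id_comp f := Subtype.ext (mul_one _)
  comp_id f := Subtype.ext (one_mul _)
  assoc f g h := Subtype.ext (mul_assoc h.1 g.1 f.1).symm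

variable {P : Type} [PartialOrder P] [MulAction G P]
    [CovariantClass G P (· • ·) (· ≤ ·)]

theorem smul_le_smul_act (g : G) {a b : P} (h : a ≤ b) : g • a ≤ g • b :=
  CovariantClass.elim g h

/-- An initial (i.e. bottom) element of a `G`-poset is fixed by `G`. -/
theorem smul_bot_eq {x₀ : P} (hbot : ∀ x : P, x₀ ≤ x) (g : G) : g • x₀ = x₀ :=
  le_antisymm (by simpa using smul_le_smul_act g (hbot (g⁻¹ • x₀))) (hbot _)

/-- The endomorphism `(g, id)` of the initial object `x₀` of `P ⋊ G`. -/
def gmor {x₀ : P} (hbot : ∀ x : P, x₀ ≤ x) (g : G) :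
    (⟨x₀⟩ : Transporter G P) ⟶ (⟨x₀⟩ : Transporter G P) :=
  ⟨g, le_of_eq (smul_bot_eq hbot g)⟩

theorem gmor_comp {x₀ : P} (hbot : ∀ x : P, x₀ ≤ x) (a b : G) :
    gmor (G := G) hbot b ≫ gmor hbot a = gmor hbot (a * b) := rfl

theorem gmor_one {x₀ : P} (hbot : ∀ x : P, x₀ ≤ x) :
    gmor (G := G) hbot (1 : G) = 𝟙 (⟨x₀⟩ : Transporter G P) := rfl

/-- The projection functor `π : P ⋊ G ⥤ G`. -/
def piFunctor (G P : Type) [Group G] [PartialOrder P] [MulAction G P]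
    [CovariantClass G P (· • ·) (· ≤ ·)] : Transporter G P ⥤ SingleObj G where
  obj _ := SingleObj.star G
  map f := f.1
  map_id _ := rfl
  map_comp _ _ := rfl

/-! ## Quotients of transporter categories and fixed-point presheaves -/

variable {C : Type} [SmallCategory C]

section
variable (ρ : Transporter G P ⥤ C) {x₀ : P} (hbot : ∀ x : P, x₀ ≤ x)

/-- `Hom_C(x₀, c)` as a right `G`-set, with `f · g := ρ(g, id) ≫ f`. -/
def homGSet (c : C) : GSet G where
  obj _ := (ρ.obj ⟨x₀⟩ ⟶ c)
  map f := TypeCat.ofHom (fun φ => ρ.map (gmor hbot f.unop) ≫ φ)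
  map_id _ := by
    ext φ
    show ρ.map (gmor hbot (1 : G)) ≫ φ = φ
    rw [gmor_one, ρ.map_id, Category.id_comp]
  map_comp {X Y Z} f g := by
    ext φ
    show ρ.map (gmor hbot (f.unop * g.unop)) ≫ φ =
      ρ.map (gmor hbot g.unop) ≫ ρ.map (gmor hbot f.unop) ≫ φ
    rw [← gmor_comp, ρ.map_comp, Category.assoc]

/-- Postcomposition `Hom_C(x₀, c) → Hom_C(x₀, c')` with `φ : c ⟶ c'`, as a map
of right `G`-sets. -/
def homGSetMap {c c' : C} (φ : c ⟶ c') : homGSet ρ hbot c ⟶ homGSet ρ hbot c' where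
  app _ := TypeCat.ofHom (fun f => (show ρ.obj ⟨x₀⟩ ⟶ c from f) ≫ φ)
  naturality X Y f := by
    ext ψ
    show (ρ.map (gmor hbot f.unop) ≫ (show ρ.obj ⟨x₀⟩ ⟶ c from ψ)) ≫ φ =
      ρ.map (gmor hbot f.unop) ≫ ((show ρ.obj ⟨x₀⟩ ⟶ c from ψ) ≫ φ)
    exact Category.assoc _ _ _

theorem homGSetMap_id (c : C) : homGSetMap ρ hbot (𝟙 c) = 𝟙 (homGSet ρ hbot c) := by
  apply NatTrans.ext
  funext X
  ext f
  exact Category.comp_id f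

theorem homGSetMap_comp {c c' c'' : C} (φ : c ⟶ c') (ψ : c' ⟶ c'') :
    homGSetMap ρ hbot (φ ≫ ψ) = homGSetMap ρ hbot φ ≫ homGSetMap ρ hbot ψ := by
  apply NatTrans.ext
  funext X
  ext f
  exact (Category.assoc _ _ _).symm

/-- The fixed-point presheaf `F_M : x ↦ Hom_{G-Set}(Hom_C(x₀, x), M)` on `C`. -/
def fixedPointPresheaf (M : GSet G) : Cᵒᵖ ⥤ Type where
  obj c := homGSet ρ hbot c.unop ⟶ M
  map {c c'} ψ := TypeCat.ofHom (fun η => homGSetMap ρ hbot ψ.unop ≫ η)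
  map_id c := by
    refine TypeCat.homEquiv.injective (funext fun η => ?_)
    show homGSetMap ρ hbot (𝟙 c.unop) ≫ η = η
    rw [homGSetMap_id, Category.id_comp]
  map_comp {c c' c''} ψ ψ' := by
    refine TypeCat.homEquiv.injective (funext fun η => ?_)
    show homGSetMap ρ hbot (ψ'.unop ≫ ψ.unop) ≫ η = _
    rw [homGSetMap_comp, Category.assoc]
    rfl

/-- The right `G`-set `𝔊(x₀)` attached to a presheaf `𝔊` on `C`: `g ∈ G`
acts as `𝔊(ρ(g, id))`. -/
def evalGSet (𝔊 : Cᵒᵖ ⥤ Type) : GSet G where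
  obj _ := 𝔊.obj (Opposite.op (ρ.obj ⟨x₀⟩))
  map f := 𝔊.map (ρ.map (gmor hbot f.unop)).op
  map_id _ := by
    show 𝔊.map (ρ.map (gmor hbot (1 : G))).op = _
    rw [gmor_one, ρ.map_id]
    exact 𝔊.map_id _
  map_comp {X Y Z} f g := by
    show 𝔊.map (ρ.map (gmor hbot (f.unop * g.unop))).op = _
    rw [← gmor_comp, ρ.map_comp, op_comp, 𝔊.map_comp]

end

/-- `ρ : P⋊G ⥤ C` is a category extension: it is bijective on objects,
surjective on morphism sets, the kernel groups `K(y)` act freely by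
postcomposition on hom sets, and `ρ` exactly identifies the `K(y)`-orbits of
morphisms, i.e. `K(y)\Hom(x, y) ≅ Hom_C(ρx, ρy)`. -/
structure IsCatExtension (ρ : Transporter G P ⥤ C) : Prop where
  bij_obj : Function.Bijective ρ.obj
  surj_map : ∀ {x y : Transporter G P} (f : ρ.obj x ⟶ ρ.obj y), ∃ u : x ⟶ y, ρ.map u = f
  free : ∀ {y : Transporter G P} (α : y ⟶ y), ρ.map α = 𝟙 (ρ.obj y) →
    ∀ {x : Transporter G P} (u : x ⟶ y), u ≫ α = u → α = 𝟙 y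
  fiber : ∀ {x y : Transporter G P} (u u' : x ⟶ y),
    ρ.map u = ρ.map u' ↔ ∃ α : y ⟶ y, ρ.map α = 𝟙 (ρ.obj y) ∧ u ≫ α = u'

/-! ## The transporter category `T(G)` on subgroups -/

/-- The transporter category `T(G)`: objects are the subgroups of `G`,
morphisms `H ⟶ K` are elements `g ∈ G` with `gHg⁻¹ ≤ K`. -/
@[ext] structure TransporterCat (G : Type) [Group G] where sub : Subgroup G

instance TransporterCat.category (G : Type) [Group G] : Category (TransporterCat G) where
  Hom H K := { g : G // ∀ h ∈ H.sub, g * h * g⁻¹ ∈ K.sub }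
  id H := ⟨1, fun h hh => by simpa using hh⟩
  comp {H K L} f g := ⟨g.1 * f.1, fun h hh => by
    have hmem := g.2 _ (f.2 h hh)
    have heq : g.1 * (f.1 * h * f.1⁻¹) * g.1⁻¹ = (g.1 * f.1) * h * (g.1 * f.1)⁻¹ := by group
    rwa [heq] at hmem⟩
  id_comp f := Subtype.ext (mul_one _)
  comp_id f := Subtype.ext (one_mul _)
  assoc f g h := Subtype.ext (mul_assoc h.1 g.1 f.1).symm

/-- The conjugate subgroup `gHg⁻¹`. -/
def conjSubgroup (g : G) (H : Subgroup G) : Subgroup G :=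
  H.map (MulAut.conj g).toMonoidHom

lemma conjSubgroup_inv_mem {g : G} {H : Subgroup G} {w : G}
    (hw : w ∈ conjSubgroup g H) : g⁻¹ * w * g⁻¹⁻¹ ∈ H := by
  obtain ⟨h, hh, rfl⟩ := hw
  have : g⁻¹ * ((MulAut.conj g).toMonoidHom h) * g⁻¹⁻¹ = h := by
    simp [MulAut.conj_apply]; group
  rwa [this]

/-- The `G`-map `H\G → K\G`, `Hk ↦ Kgk`, attached to `g ∈ G` with `gHg⁻¹ ≤ K`. -/
def transToOrbit {H K : Subgroup G} (g : { g : G // ∀ h ∈ H, g * h * g⁻¹ ∈ K }) :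
    cosetGSet H ⟶ cosetGSet K where
  app _ := TypeCat.ofHom (Quotient.map' (fun k => g.1 * k)
    (fun a b hab => by
      rw [QuotientGroup.rightRel_apply] at hab ⊢
      have := g.2 _ hab
      have heq : g.1 * (b * a⁻¹) * g.1⁻¹ = (g.1 * b) * (g.1 * a)⁻¹ := by group
      rwa [heq] at this))
  naturality X Y f := by
    ext q
    induction q using Quotient.inductionOn' with
    | h k => exact congrArg (Quotient.mk _) (mul_assoc g.1 k f.unop).symm

/-- The setoid on `{g : G // gHg⁻¹ ≤ K}` whose classes are right cosets `Kg`. -/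
def transSetoid (H K : Subgroup G) : Setoid { g : G // ∀ h ∈ H, g * h * g⁻¹ ∈ K } where
  r a b := a.1 * b.1⁻¹ ∈ K
  iseqv := by
    constructor
    · intro a; simpa using K.one_mem
    · intro a b h
      simpa using K.inv_mem h
    · intro a b c h1 h2
      have := K.mul_mem h1 h2
      simpa [mul_assoc] using this

/-! ## The coset space `H\G` as a discrete `G`-poset -/

/-- The coset space `H\G` as a discretely ordered `G`-poset, with `g` acting
by `Hk ↦ Hkg⁻¹`. -/
def CosetPoset (G : Type) [Group G] (H : Subgroup G) :=
  Quotient (QuotientGroup.rightRel H)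

instance (H : Subgroup G) : PartialOrder (CosetPoset G H) where
  le x y := x = y
  le_refl _ := rfl
  le_trans _ _ _ h h' := Eq.trans h h'
  le_antisymm _ _ h _ := h

instance (H : Subgroup G) : MulAction G (CosetPoset G H) where
  smul g := Quotient.map' (fun k => k * g⁻¹)
    (fun a b hab => by
      rw [QuotientGroup.rightRel_apply] at hab ⊢
      simpa [mul_assoc] using hab)
  one_smul q := by
    induction q using Quotient.inductionOn' with
    | h k => exact congrArg (Quotient.mk _) (by simp)
  mul_smul a b q := by
    induction q using Quotient.inductionOn' with
    | h k => exact congrArg (Quotient.mk _) (by simp [mul_assoc])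

instance (H : Subgroup G) : CovariantClass G (CosetPoset G H) (· • ·) (· ≤ ·) where
  elim g x y h := le_of_eq (congrArg (g • ·) (le_antisymm h (Eq.symm h : y ≤ x)))

/-! ## Underlying `G`-set of a right `RG`-module -/

/-- The underlying right `G`-set of a right `RG`-module. -/
noncomputable def UGSet (R : Type) [CommRing R]
    (M : ModuleCat (MonoidAlgebra R G)ᵐᵒᵖ) : GSet G where
  obj _ := M
  map f := TypeCat.ofHom (fun m => (MulOpposite.op (MonoidAlgebra.single f.unop (1 : R))) • m)
  map_id _ := by
    ext m
    show (MulOpposite.op (MonoidAlgebra.single (1 : G) (1 : R))) • m = m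
    rw [← MonoidAlgebra.one_def, MulOpposite.op_one, one_smul]
  map_comp {X Y Z} f g := by
    ext m
    show (MulOpposite.op (MonoidAlgebra.single (f.unop * g.unop) (1 : R))) • m =
      (MulOpposite.op (MonoidAlgebra.single g.unop (1 : R))) •
        ((MulOpposite.op (MonoidAlgebra.single f.unop (1 : R))) • m)
    rw [smul_smul, ← MulOpposite.op_mul, MonoidAlgebra.single_mul_single, one_mul]

namespace CategoryTheory

lemma Sieve.eq_top_of_isIso {C : Type*} [Category C] {X Y : C} (S : Sieve X) (f : Y ⟶ X)
    [IsIso f] (hf : S f) : S = ⊤ :=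
  Sieve.id_mem_iff_eq_top.mp (by simpa using S.downward_closed hf (inv f))

end CategoryTheory

namespace IsAtomicTopology

variable {C : Type*} [Category C] {J : GrothendieckTopology C}

lemma eq_bot [IsGroupoid C] (hJ : IsAtomicTopology J) : J = ⊥ := by
  ext X S
  rw [GrothendieckTopology.bot_covering, hJ]
  constructor
  · rintro ⟨Y, f, hf⟩
    exact S.eq_top_of_isIso f hf
  · rintro rfl
    exact ⟨X, 𝟙 X, trivial⟩

/-- A section over one arrow of the nonempty sieve determines the amalgamation; the Ore
condition spreads it to the other arrows. -/
theorem isSheaf_of_isIso_map (hJ : IsAtomicTopology J)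
    (hC : GrothendieckTopology.RightOreCondition C) (F : Cᵒᵖ ⥤ Type*)
    (hF : ∀ ⦃X Y : Cᵒᵖ⦄ (f : X ⟶ Y), IsIso (F.map f)) : Presieve.IsSheaf J F := by
  intro X S hS x hx
  have bij {X Y : Cᵒᵖ} (f : X ⟶ Y) : Function.Bijective (F.map f) :=
    (isIso_iff_bijective _).mp (hF f)
  obtain ⟨Y, f, hf⟩ := (hJ X S).mp hS
  obtain ⟨t, ht⟩ := (bij f.op).2 (x f hf)
  refine ⟨t, fun Z g hg => ?_, fun t' ht' => (bij f.op).1 ((ht' f hf).trans ht.symm)⟩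
  obtain ⟨W, p, q, hpq⟩ := hC g f
  apply (bij p.op).1
  calc F.map p.op (F.map g.op t) = F.map q.op (F.map f.op t) := by
        simp only [← Functor.map_comp_apply, ← op_comp, hpq]
    _ = F.map q.op (x f hf) := by rw [ht]
    _ = F.map p.op (x g hg) := (hx p q hg hf hpq).symm

end IsAtomicTopology

lemma Transporter.rightOreCondition {x₀ : P} (hbot : ∀ x : P, x₀ ≤ x) :
    GrothendieckTopology.RightOreCondition (Transporter G P) := by
  intro X Y Z f g
  refine ⟨⟨x₀⟩, ⟨1, by simpa using hbot Y.pt⟩,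
    ⟨g.1⁻¹ * f.1, by simpa [smul_bot_eq hbot] using hbot Z.pt⟩, Subtype.ext ?_⟩
  show f.1 * 1 = g.1 * (g.1⁻¹ * f.1)
  group

theorem piFunctor_continuous_cocontinuous_general (G : Type) [Group G] (P : Type) [PartialOrder P]
    [MulAction G P] [CovariantClass G P (· • ·) (· ≤ ·)]
    (x₀ : P) (hbot : ∀ x : P, x₀ ≤ x)
    (J : GrothendieckTopology (Transporter G P)) (hJ : IsAtomicTopology J)
    (JG : GrothendieckTopology (SingleObj G)) (hJG : IsAtomicTopology JG) :
    (∀ N : (SingleObj G)ᵒᵖ ⥤ Type, Presieve.IsSheaf JG N) ∧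
    (∀ M : GSet G, Presieve.IsSheaf J ((piFunctor G P).op ⋙ M)) ∧
    (∀ (x : Transporter G P) (T : Sieve ((piFunctor G P).obj x)),
      T ∈ JG ((piFunctor G P).obj x) → T.functorPullback (piFunctor G P) ∈ J x) := by
  have hJG_bot : JG = ⊥ := hJG.eq_bot
  refine ⟨fun N => hJG_bot ▸ Presieve.isSheaf_bot,
    fun M => hJ.isSheaf_of_isIso_map (Transporter.rightOreCondition hbot) _
      fun _ _ f => M.map_isIso ((piFunctor G P).map f.unop).op,
    fun x T hT => ?_⟩
  rw [hJG_bot, GrothendieckTopology.bot_covering] at hT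
  rw [hT, Sieve.functorPullback_top]
  exact J.top_mem x

/-- With the atomic topologies, `π : P⋊G ⥤ G` is continuous and cocontinuous:
every presheaf on the one-object category of `G` is a sheaf, `Res_π M` is a sheaf
on `P⋊G` for every right `G`-set `M`, and the pullback along `π` of a covering
sieve is covering. -/
theorem piFunctor_continuous_cocontinuous (G : Type) [Group G] [Finite G] (P : Type) [PartialOrder P]
    [MulAction G P] [CovariantClass G P (· • ·) (· ≤ ·)]
    (x₀ : P) (hbot : ∀ x : P, x₀ ≤ x)
    (J : GrothendieckTopology (Transporter G P)) (hJ : IsAtomicTopology J)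
    (JG : GrothendieckTopology (SingleObj G)) (hJG : IsAtomicTopology JG) :
    (∀ N : (SingleObj G)ᵒᵖ ⥤ Type, Presieve.IsSheaf JG N) ∧
    (∀ M : GSet G, Presieve.IsSheaf J ((piFunctor G P).op ⋙ M)) ∧
    (∀ (x : Transporter G P) (T : Sieve ((piFunctor G P).obj x)),
      T ∈ JG ((piFunctor G P).obj x) → T.functorPullback (piFunctor G P) ∈ J x) :=
  piFunctor_continuous_cocontinuous_general G P x₀ hbot J hJ JG hJG
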